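/- Let H be a Hopf algebra over a field k, (V, ρ) a partial H-comodule and x : H → k a k-algebra homomorphism. Define the linear map P_x : V → V by P_x = (V ⊗ x ⊗ x)(V ⊗ S ⊗ H)(ρ ⊗ H)ρ, i.e., in Sweedler-type notation P_x(v) = v^{(0)(0)} x(S(v^{(0)(1)}) v^{(1)}). Then P_x is idempotent: P_x ∘ P_x = P_x. -/

import Mathlib

open TensorProduct CategoryTheory CategoryTheory.Limits

noncomputable section

universe u

variable (k : Type u) [Field k] (H : Type u) [Ring H] [HopfAlgebra k H]

/-- Multiply the last two tensor factors using the multiplication of `H`. -/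
def mulLast (X : Type u) [AddCommGroup X] [Module k X] :
    ((X ⊗[k] H) ⊗[k] H) →ₗ[k] X ⊗[k] H :=
  (LinearMap.lTensor X (LinearMap.mul' k H)) ∘ₗ (TensorProduct.assoc k X H H).toLinearMap

/-- Comultiply the last tensor factor using the comultiplication of `H`. -/
def comulLast (X : Type u) [AddCommGroup X] [Module k X] :
    (X ⊗[k] H) →ₗ[k] (X ⊗[k] H) ⊗[k] H :=
  (TensorProduct.assoc k X H H).symm.toLinearMap ∘ₗ LinearMap.lTensor X Coalgebra.comul

/-- Apply the antipode to the last tensor factor. -/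
def antLast (X : Type u) [AddCommGroup X] [Module k X] :
    (X ⊗[k] H) →ₗ[k] X ⊗[k] H :=
  LinearMap.lTensor X (HopfAlgebra.antipode (R := k) (A := H))

/-- Apply the counit to the last tensor factor. -/
def counitLast (X : Type u) [AddCommGroup X] [Module k X] :
    (X ⊗[k] H) →ₗ[k] X :=
  (TensorProduct.rid k X).toLinearMap ∘ₗ LinearMap.lTensor X Coalgebra.counit

variable {M : Type u} [AddCommGroup M] [Module k M]

/-- `(M, ρ)` is a (right, algebraic) partial `H`-comodule: (PCM1) `ρ` is counital,
(PCM2) and (PCM3) express partial coassociativity. -/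
structure IsPartialComodule (ρ : M →ₗ[k] M ⊗[k] H) : Prop where
  counit : counitLast k H M ∘ₗ ρ = LinearMap.id
  pcm2 :
    mulLast k H (M ⊗[k] H) ∘ₗ antLast k H ((M ⊗[k] H) ⊗[k] H) ∘ₗ
        LinearMap.rTensor H (comulLast k H M) ∘ₗ LinearMap.rTensor H ρ ∘ₗ ρ =
    mulLast k H (M ⊗[k] H) ∘ₗ antLast k H ((M ⊗[k] H) ⊗[k] H) ∘ₗ
        LinearMap.rTensor H (LinearMap.rTensor H ρ) ∘ₗ LinearMap.rTensor H ρ ∘ₗ ρ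
  pcm3 :
    LinearMap.rTensor H (mulLast k H M) ∘ₗ LinearMap.rTensor H (antLast k H (M ⊗[k] H)) ∘ₗ
        comulLast k H (M ⊗[k] H) ∘ₗ LinearMap.rTensor H ρ ∘ₗ ρ =
    LinearMap.rTensor H (mulLast k H M) ∘ₗ LinearMap.rTensor H (antLast k H (M ⊗[k] H)) ∘ₗ
        LinearMap.rTensor H (LinearMap.rTensor H ρ) ∘ₗ LinearMap.rTensor H ρ ∘ₗ ρ


/-- Evaluate an algebra map `x : H → k` on the last tensor factor. -/
def evalLast (x : H →ₐ[k] k) (X : Type u) [AddCommGroup X] [Module k X] :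
    (X ⊗[k] H) →ₗ[k] X :=
  (TensorProduct.rid k X).toLinearMap ∘ₗ LinearMap.lTensor X x.toLinearMap

/-- The operator `P_x = (V ⊗ x ⊗ x)(V ⊗ S ⊗ H)(ρ ⊗ H)ρ`,
i.e. `P_x(v) = v^{(0)(0)} x(S(v^{(0)(1)}) v^{(1)})`. -/
def Pmap {V : Type u} [AddCommGroup V] [Module k V] (ρ : V →ₗ[k] V ⊗[k] H)
    (x : H →ₐ[k] k) : V →ₗ[k] V :=
  evalLast k H x V ∘ₗ evalLast k H x (V ⊗[k] H) ∘ₗ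
    LinearMap.rTensor H (antLast k H V) ∘ₗ LinearMap.rTensor H ρ ∘ₗ ρ

/-!
Write `E = V ⊗ (x ∘ S)` and `Q = (V ⊗ x) ∘ (E ⊗ H)`, so that `P_x = Q ∘ (ρ ⊗ H) ∘ ρ`. As `x` is
multiplicative, `Q` turns the outer `(μ)(S)` of both sides of (PCM2) into `E ∘ (Q ⊗ H)`; as `x ∘ S`
is the convolution inverse of `x`, `Q ∘ (V ⊗ Δ) = V ⊗ ε`. Hence `Q` applied to (PCM2), with (PCM1),
reads `E ∘ (P_x ⊗ H) ∘ ρ = E ∘ ρ`. Since `P_x ∘ Q = Q ∘ (P_x ⊗ H ⊗ H)`, this gives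
`P_x ∘ P_x = (V ⊗ x) ∘ ((E ∘ (P_x ⊗ H) ∘ ρ) ⊗ H) ∘ ρ = (V ⊗ x) ∘ ((E ∘ ρ) ⊗ H) ∘ ρ = P_x`.
-/

section Idempotent

open LinearMap (rTensor)

@[simp] lemma evalLast_tmul (x : H →ₐ[k] k) (X : Type u) [AddCommGroup X] [Module k X]
    (w : X) (h : H) : evalLast k H x X (w ⊗ₜ h) = x h • w := by
  simp [evalLast]

@[simp] lemma antLast_tmul (X : Type u) [AddCommGroup X] [Module k X] (w : X) (h : H) :
    antLast k H X (w ⊗ₜ h) = w ⊗ₜ HopfAlgebra.antipode k h := by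
  simp [antLast]

@[simp] lemma counitLast_tmul (X : Type u) [AddCommGroup X] [Module k X] (w : X) (h : H) :
    counitLast k H X (w ⊗ₜ h) = Coalgebra.counit (R := k) h • w := by
  simp [counitLast]

@[simp] lemma mulLast_tmul (X : Type u) [AddCommGroup X] [Module k X] (w : X) (a b : H) :
    mulLast k H X ((w ⊗ₜ a) ⊗ₜ b) = w ⊗ₜ (a * b) := by
  simp [mulLast]

lemma comulLast_tmul (X : Type u) [AddCommGroup X] [Module k X] (w : X) (h : H)
    (r : Coalgebra.Repr k h (H × H)) :
    comulLast k H X (w ⊗ₜ h) = ∑ i ∈ r.index, (w ⊗ₜ r.left i) ⊗ₜ r.right i := by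
  simp [comulLast, ← r.eq, tmul_sum]

variable (x : H →ₐ[k] k)

lemma sum_algHom_antipode_mul_eq_counit {h : H} (r : Coalgebra.Repr k h (H × H)) :
    ∑ i ∈ r.index, x (HopfAlgebra.antipode k (r.left i)) * x (r.right i) =
      Coalgebra.counit (R := k) h := by
  simp only [← map_mul, ← map_sum, HopfAlgebra.sum_antipode_mul_eq_algebraMap_counit r,
    AlgHom.commutes, Algebra.algebraMap_self, RingHom.id_apply]

variable (X : Type u) [AddCommGroup X] [Module k X]

def evalAntipodeLast : X ⊗[k] H →ₗ[k] X :=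
  evalLast k H x X ∘ₗ antLast k H X

def evalLastTwo : (X ⊗[k] H) ⊗[k] H →ₗ[k] X :=
  evalLast k H x X ∘ₗ rTensor H (evalAntipodeLast k H x X)

@[simp] lemma evalAntipodeLast_tmul (w : X) (h : H) :
    evalAntipodeLast k H x X (w ⊗ₜ h) = x (HopfAlgebra.antipode k h) • w := by
  simp [evalAntipodeLast]

@[simp] lemma evalLastTwo_tmul (w : X) (a b : H) :
    evalLastTwo k H x X ((w ⊗ₜ a) ⊗ₜ b) = (x (HopfAlgebra.antipode k a) * x b) • w := by
  simp [evalLastTwo, smul_smul, mul_comm]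

lemma comp_evalLastTwo {Y : Type u} [AddCommGroup Y] [Module k Y] (f : X →ₗ[k] Y) :
    f ∘ₗ evalLastTwo k H x X = evalLastTwo k H x Y ∘ₗ rTensor H (rTensor H f) := by
  ext w a b
  simp

lemma evalLastTwo_comp_comulLast :
    evalLastTwo k H x X ∘ₗ comulLast k H X = counitLast k H X := by
  ext w h
  simp [comulLast_tmul k H X w h (Coalgebra.Repr.arbitrary k h), ← Finset.sum_smul,
    sum_algHom_antipode_mul_eq_counit]

lemma evalLastTwo_comp_mulLast_antLast :
    evalLastTwo k H x X ∘ₗ mulLast k H (X ⊗[k] H) ∘ₗ antLast k H ((X ⊗[k] H) ⊗[k] H) =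
      evalAntipodeLast k H x X ∘ₗ rTensor H (evalLastTwo k H x X) := by
  ext w a b c
  simp [smul_smul, mul_comm, mul_left_comm]

variable {V : Type u} [AddCommGroup V] [Module k V] (ρ : V →ₗ[k] V ⊗[k] H)

lemma Pmap_eq_evalLastTwo : Pmap k H ρ x = evalLastTwo k H x V ∘ₗ rTensor H ρ ∘ₗ ρ := by
  have : evalLast k H x V ∘ₗ evalLast k H x (V ⊗[k] H) ∘ₗ rTensor H (antLast k H V) =
      evalLastTwo k H x V := by
    ext w a b
    simp [smul_smul, mul_comm]
  simp only [Pmap, ← this, LinearMap.comp_assoc]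

lemma IsPartialComodule.evalAntipodeLast_comp_rTensor_Pmap (hρ : IsPartialComodule k H ρ) :
    evalAntipodeLast k H x V ∘ₗ rTensor H (Pmap k H ρ x) ∘ₗ ρ =
      evalAntipodeLast k H x V ∘ₗ ρ := by
  have hQ := evalLastTwo_comp_mulLast_antLast k H x V
  calc evalAntipodeLast k H x V ∘ₗ rTensor H (Pmap k H ρ x) ∘ₗ ρ
      = (evalLastTwo k H x V ∘ₗ mulLast k H (V ⊗[k] H) ∘ₗ
            antLast k H ((V ⊗[k] H) ⊗[k] H)) ∘ₗ rTensor H (rTensor H ρ) ∘ₗ rTensor H ρ ∘ₗ ρ := by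
        rw [hQ, Pmap_eq_evalLastTwo]
        simp only [LinearMap.rTensor_comp, LinearMap.comp_assoc]
    _ = (evalLastTwo k H x V ∘ₗ mulLast k H (V ⊗[k] H) ∘ₗ
            antLast k H ((V ⊗[k] H) ⊗[k] H)) ∘ₗ
          rTensor H (comulLast k H V) ∘ₗ rTensor H ρ ∘ₗ ρ := by
        simp only [LinearMap.comp_assoc, hρ.pcm2]
    _ = evalAntipodeLast k H x V ∘ₗ
          rTensor H ((evalLastTwo k H x V ∘ₗ comulLast k H V) ∘ₗ ρ) ∘ₗ ρ := by
        rw [hQ]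
        simp only [LinearMap.rTensor_comp, LinearMap.comp_assoc]
    _ = evalAntipodeLast k H x V ∘ₗ ρ := by
        rw [evalLastTwo_comp_comulLast, hρ.counit, LinearMap.rTensor_id, LinearMap.id_comp]

end Idempotent

/-- For a partial `H`-comodule `(V, ρ)` and an algebra map `x : H → k`,
the operator `P_x` is idempotent. -/
theorem Pmap_idempotent {V : Type u} [AddCommGroup V] [Module k V]
    (ρ : V →ₗ[k] V ⊗[k] H) (hρ : IsPartialComodule k H ρ) (x : H →ₐ[k] k) :
    Pmap k H ρ x ∘ₗ Pmap k H ρ x = Pmap k H ρ x := by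
  calc Pmap k H ρ x ∘ₗ Pmap k H ρ x
      = (Pmap k H ρ x ∘ₗ evalLastTwo k H x V) ∘ₗ LinearMap.rTensor H ρ ∘ₗ ρ := by
        nth_rewrite 2 [Pmap_eq_evalLastTwo]
        rfl
    _ = evalLast k H x V ∘ₗ LinearMap.rTensor H
          (evalAntipodeLast k H x V ∘ₗ LinearMap.rTensor H (Pmap k H ρ x) ∘ₗ ρ) ∘ₗ ρ := by
        rw [comp_evalLastTwo, evalLastTwo]
        simp only [LinearMap.rTensor_comp, LinearMap.comp_assoc]
    _ = Pmap k H ρ x := by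
        rw [hρ.evalAntipodeLast_comp_rTensor_Pmap, Pmap_eq_evalLastTwo, evalLastTwo]
        simp only [LinearMap.rTensor_comp, LinearMap.comp_assoc]

end
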